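/- Let K be a compact scattered topological space, with compact open sets V_t (t ∈ K) fixed so that V_t ∩ K^(α(t)) = {t}, and let H be a nonempty closed subset of K. If A and B are admissible finite subsets of K with A ⊆ H ⊆ V_A and B ⊆ H ⊆ V_B, then A = B. -/

import Mathlib

/-!
A point of `V t` of rank at least `α t` lies in `V t ∩ K^(α t) = {t}`, so it is `t`.
If `A ≠ B`, pick `c` of maximal rank in `A ∆ B`, say `c ∈ A \ B`. Then `c ∈ V b` for some
`b ∈ B`; admissibility of `A` forces `b ∉ A`, so `α b ≤ α c` by maximality and `c = b ∈ B`,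
a contradiction.
-/

universe u

open Set
open scoped symmDiff

/-- Iterated derived sets: `K^(0) = K` and `K^(γ) = ⋂_{α<γ} (K^(α))'` for `γ > 0`. -/
noncomputable def iterDerived (K : Type u) [TopologicalSpace K] : Ordinal.{u} → Set K :=
  fun γ =>
    if γ = 0 then Set.univ
    else ⋂ α : {α : Ordinal.{u} // α < γ}, derivedSet (iterDerived K α.1)
termination_by γ => γ
decreasing_by exact α.2

/-- A topological space is scattered if every nonempty closed subset has an isolated point. -/
def IsScattered (K : Type u) [TopologicalSpace K] : Prop :=
  ∀ C : Set K, IsClosed C → C.Nonempty → ∃ x ∈ C, x ∉ derivedSet C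

/-- A finite set `A` is admissible (w.r.t. the family `V`) if `s ∉ V t` whenever
`s` and `t` are distinct elements of `A`. -/
def Admissible {K : Type u} (V : K → Set K) (A : Finset K) : Prop :=
  ∀ s ∈ A, ∀ t ∈ A, s ≠ t → s ∉ V t

section

variable {K : Type u}

theorem iterDerived_antitone [TopologicalSpace K] : Antitone (iterDerived K) := by
  intro β γ hle x hx
  rw [iterDerived] at hx ⊢
  by_cases hβ : β = 0
  · rw [if_pos hβ]; trivial
  have hγ : γ ≠ 0 := fun hγ => hβ (nonpos_iff_eq_zero.mp (hγ ▸ hle))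
  rw [if_neg hβ]
  rw [if_neg hγ] at hx
  exact mem_iInter.mpr fun a => mem_iInter.mp hx ⟨a.1, a.2.trans_le hle⟩

theorem eq_of_mem_of_le_rank [TopologicalSpace K] {α : K → Ordinal.{u}} {V : K → Set K}
    (hα : ∀ t, t ∈ iterDerived K (α t)) (hV : ∀ t, V t ∩ iterDerived K (α t) = {t})
    {s t : K} (hst : s ∈ V t) (hle : α t ≤ α s) : s = t := by
  have hs : s ∈ V t ∩ iterDerived K (α t) := ⟨hst, iterDerived_antitone hle (hα s)⟩
  rwa [hV t] at hs

variable {β : Type*} [LinearOrder β] {V : K → Set K} {r : K → β}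

theorem Admissible.mem_of_forall_rank_le (hr : ∀ s t, s ∈ V t → r t ≤ r s → s = t)
    {A B : Finset K} (hA : Admissible V A) (hAB : (A : Set K) ⊆ ⋃ t ∈ B, V t)
    {c : K} (hc : c ∈ A) (hmax : ∀ x ∈ B, x ∉ A → r x ≤ r c) : c ∈ B := by
  obtain ⟨b, hb, hcb⟩ : ∃ b ∈ B, c ∈ V b := by simpa using hAB hc
  by_cases hbA : b ∈ A
  · by_contra hcB
    exact hA c hc b hbA (fun h => hcB (h ▸ hb)) hcb
  · exact hr c b hcb (hmax b hb hbA) ▸ hb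

theorem Admissible.eq_of_subset_biUnion (hr : ∀ s t, s ∈ V t → r t ≤ r s → s = t)
    {A B : Finset K} (hA : Admissible V A) (hB : Admissible V B)
    (hAB : (A : Set K) ⊆ ⋃ t ∈ B, V t) (hBA : (B : Set K) ⊆ ⋃ t ∈ A, V t) : A = B := by
  classical
  by_contra hne
  obtain ⟨c, hc, hmax⟩ := Finset.exists_max_image (A ∆ B) r (Finset.symmDiff_nonempty.mpr hne)
  rcases Finset.mem_symmDiff.mp hc with ⟨hcA, hcB⟩ | ⟨hcB, hcA⟩
  · exact hcB <| hA.mem_of_forall_rank_le hr hAB hcA fun x hxB hxA =>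
      hmax x (Finset.mem_symmDiff.mpr (Or.inr ⟨hxB, hxA⟩))
  · exact hcA <| hB.mem_of_forall_rank_le hr hBA hcB fun x hxA hxB =>
      hmax x (Finset.mem_symmDiff.mpr (Or.inl ⟨hxA, hxB⟩))

end

theorem stmt_2_general (K : Type u) [TopologicalSpace K]
    (α : K → Ordinal.{u})
    (hα : ∀ t, t ∈ iterDerived K (α t) ∧ t ∉ iterDerived K (α t + 1))
    (V : K → Set K)
    (hV : ∀ t, V t ∩ iterDerived K (α t) = {t})
    (H : Set K)
    (A B : Finset K)
    (hA : Admissible V A) (hB : Admissible V B)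
    (hAH : (A : Set K) ⊆ H) (hHA : H ⊆ ⋃ t ∈ A, V t)
    (hBH : (B : Set K) ⊆ H) (hHB : H ⊆ ⋃ t ∈ B, V t) :
    A = B :=
  hA.eq_of_subset_biUnion (fun _ _ => eq_of_mem_of_le_rank (fun t => (hα t).1) hV) hB
    (hAH.trans hHB) (hBH.trans hHA)

theorem stmt_2 (K : Type u) [TopologicalSpace K] [CompactSpace K]
    (hscat : IsScattered K)
    (α : K → Ordinal.{u})
    (hα : ∀ t, t ∈ iterDerived K (α t) ∧ t ∉ iterDerived K (α t + 1))
    (V : K → Set K)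
    (hVcomp : ∀ t, IsCompact (V t)) (hVopen : ∀ t, IsOpen (V t))
    (hV : ∀ t, V t ∩ iterDerived K (α t) = {t})
    (H : Set K) (hHcl : IsClosed H) (hHne : H.Nonempty)
    (A B : Finset K)
    (hA : Admissible V A) (hB : Admissible V B)
    (hAH : (A : Set K) ⊆ H) (hHA : H ⊆ ⋃ t ∈ A, V t)
    (hBH : (B : Set K) ⊆ H) (hHB : H ⊆ ⋃ t ∈ B, V t) :
    A = B :=
  stmt_2_general K α hα V hV H A B hA hB hAH hHA hBH hHB
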